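/- arXiv:2001.03262 — 5 statements merged into one kernel-verified Lean document; each statement's English description precedes it below -/
import Mathlib

section
/- Let S ⊆ (2ℕ₀)ⁿ be a finite set of exponent vectors such that for every i ∈ {1,…,n} there exists k_i ∈ ℕ with 2k_i e_i ∈ S, and let c_α > 0 for each α ∈ S. Then the polynomial F(x) = Σ_{α∈S} c_α x^α is coercive on ℝⁿ. -/
open MvPolynomial Filter

noncomputable section

open scoped Classical

/-- The embedding of exponent vectors into `ℝⁿ`. -/
def expEmbed {n : ℕ} (α : Fin n →₀ ℕ) : Fin n → ℝ := fun i => (α i : ℝ)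

/-- The Newton polytope at infinity `New∞(f) = conv(A(f) ∪ {0})`. -/
def newtonInfty {n : ℕ} (f : MvPolynomial (Fin n) ℝ) : Set (Fin n → ℝ) :=
  convexHull ℝ (expEmbed '' ((insert 0 f.support : Finset (Fin n →₀ ℕ)) : Set (Fin n →₀ ℕ)))

/-- The vertex set `V₀(f)` of the Newton polytope at infinity, as a
finset of exponent vectors. -/
def V0 {n : ℕ} (f : MvPolynomial (Fin n) ℝ) : Finset (Fin n →₀ ℕ) :=
  (insert 0 f.support).filter fun α => expEmbed α ∈ Set.extremePoints ℝ (newtonInfty f)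

/-- The set `V(f) = V₀(f) \ {0}` of vertices at infinity. -/
def Vinf {n : ℕ} (f : MvPolynomial (Fin n) ℝ) : Finset (Fin n →₀ ℕ) := (V0 f).erase 0

/-- An exponent vector with all entries even, i.e. a member of `(2ℕ₀)ⁿ`. -/
def IsEvenExp {n : ℕ} (α : Fin n →₀ ℕ) : Prop := ∀ i, Even (α i)

/-- Condition (C1): `V(f) ⊆ (2ℕ₀)ⁿ`. -/
def CondC1 {n : ℕ} (f : MvPolynomial (Fin n) ℝ) : Prop := ∀ α ∈ Vinf f, IsEvenExp α

/-- Condition (C2): positive coefficients at all vertices at infinity. -/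
def CondC2 {n : ℕ} (f : MvPolynomial (Fin n) ℝ) : Prop := ∀ α ∈ Vinf f, 0 < f.coeff α

/-- Condition (C3): `V(f)` contains a vector `2 kᵢ eᵢ` for every `i`. -/
def CondC3 {n : ℕ} (f : MvPolynomial (Fin n) ℝ) : Prop :=
  ∀ i : Fin n, ∃ k : ℕ, 0 < k ∧ Finsupp.single i (2 * k) ∈ Vinf f

/-- An exponent vector of `f` is gem degenerate if it is no vertex at infinity but lies in
some nonempty face of `New∞(f)` not containing the origin. -/
def IsGemDegenerate {n : ℕ} (f : MvPolynomial (Fin n) ℝ) (α : Fin n →₀ ℕ) : Prop :=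
  α ∈ f.support ∧ α ∉ Vinf f ∧
    ∃ G : Set (Fin n → ℝ), G.Nonempty ∧ IsExtreme ℝ (newtonInfty f) G ∧
      (0 : Fin n → ℝ) ∉ G ∧ expEmbed α ∈ G

/-- The set `D(f)` of gem degenerate exponent vectors of `f`. -/
def Dfin {n : ℕ} (f : MvPolynomial (Fin n) ℝ) : Finset (Fin n →₀ ℕ) :=
  f.support.filter fun α => IsGemDegenerate f α

/-- `f` is gem regular if `D(f) = ∅`. -/
def GemRegular {n : ℕ} (f : MvPolynomial (Fin n) ℝ) : Prop := ∀ α, ¬ IsGemDegenerate f α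

/-- `V₀ᶜ(f) = A(f) \ V₀(f)`. -/
def V0c {n : ℕ} (f : MvPolynomial (Fin n) ℝ) : Finset (Fin n →₀ ℕ) := f.support \ V0 f

/-- A map of minimal barycentric coordinates of `f`. -/
def IsMinBary {n : ℕ} (f : MvPolynomial (Fin n) ℝ)
    (lam : (Fin n →₀ ℕ) → (Fin n →₀ ℕ) → ℝ) : Prop :=
  (∀ αs α, 0 ≤ lam αs α ∧ lam αs α ≤ 1) ∧
  ∀ αs ∈ V0c f, ∃ W : Finset (Fin n →₀ ℕ), W ⊆ V0 f ∧
    AffineIndependent ℝ (fun w : W => expEmbed (w : Fin n →₀ ℕ)) ∧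
    (∀ α ∈ W, 0 < lam αs α) ∧
    (∀ α ∈ V0 f, α ∉ W → lam αs α = 0) ∧
    (∑ α ∈ W, lam αs α) = 1 ∧
    (∑ α ∈ W, lam αs α • expEmbed α) = expEmbed αs

/-- `W_{α*}(λ_f)`, the minimal vertex representation of `α*` corresponding to `λ_f`. -/
def Wfin {n : ℕ} (f : MvPolynomial (Fin n) ℝ)
    (lam : (Fin n →₀ ℕ) → (Fin n →₀ ℕ) → ℝ) (αs : Fin n →₀ ℕ) : Finset (Fin n →₀ ℕ) :=
  (V0 f).filter fun α => 0 < lam αs α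

/-- The circuit number `Θ(f, λ_f, α*)`. -/
def circuitNumber {n : ℕ} (f : MvPolynomial (Fin n) ℝ)
    (lam : (Fin n →₀ ℕ) → (Fin n →₀ ℕ) → ℝ) (αs : Fin n →₀ ℕ) : ℝ :=
  ∏ α ∈ Wfin f lam αs, (f.coeff α / lam αs α) ^ (lam αs α)

/-- `g` is coercive on `ℝⁿ`: `g(x) → +∞` whenever `‖x‖ → +∞`. -/
def Coercive {n : ℕ} (g : (Fin n → ℝ) → ℝ) : Prop :=
  Tendsto g (comap (fun x : Fin n → ℝ => ‖x‖) atTop) atTop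


/-! Every monomial `x^α` with `α ∈ (2ℕ₀)ⁿ` is nonnegative, so `F` dominates each of its terms.
For `‖x‖ ≥ 1` the sup norm is `|xᵢ|` for some coordinate `i`, and the axis term gives
`F(x) ≥ c_{2kᵢeᵢ} xᵢ^{2kᵢ} ≥ C ‖x‖²` with `C` the least coefficient. -/

lemma Finset.exists_pos_forall_le_of_forall_pos {β : Type*} {S : Finset β} {c : β → ℝ}
    (hc : ∀ a ∈ S, 0 < c a) : ∃ C > 0, ∀ a ∈ S, C ≤ c a := by
  rcases S.eq_empty_or_nonempty with rfl | hS
  · exact ⟨1, one_pos, by simp⟩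
  · obtain ⟨a, ha, hmin⟩ := S.exists_min_image c hS
    exact ⟨c a, hc a ha, hmin⟩

lemma Pi.exists_norm_eq_norm_apply {ι : Type*} [Fintype ι] {E : Type*} [SeminormedAddGroup E]
    {x : ι → E} (hx : x ≠ 0) : ∃ i, ‖x‖ = ‖x i‖ := by
  obtain ⟨j, -⟩ := Function.ne_iff.1 hx
  have : Nonempty ι := ⟨j⟩
  obtain ⟨i, -, hi⟩ := Finset.exists_mem_eq_sup Finset.univ Finset.univ_nonempty fun i => ‖x i‖₊
  exact ⟨i, by rw [Pi.norm_def, hi, coe_nnnorm]⟩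

lemma sq_le_pow_of_one_le_abs {R : Type*} [Ring R] [LinearOrder R] [IsStrictOrderedRing R]
    {t : R} {k : ℕ} (ht : 1 ≤ |t|) (hk : 0 < k) : t ^ 2 ≤ t ^ (2 * k) := by
  have hsq : 1 ≤ t ^ 2 := by rw [← sq_abs]; exact one_le_pow₀ ht
  rw [pow_mul]
  exact le_self_pow₀ hsq hk.ne'

lemma Finset.prod_pow_nonneg_of_even {ι R : Type*} [CommRing R] [LinearOrder R]
    [IsStrictOrderedRing R] (s : Finset ι) (x : ι → R) {α : ι → ℕ} (hα : ∀ i, Even (α i)) :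
    0 ≤ ∏ i ∈ s, x i ^ α i :=
  Finset.prod_nonneg fun i _ => (hα i).pow_nonneg _

lemma Fintype.prod_pow_single {ι M : Type*} [Fintype ι] [DecidableEq ι] [CommMonoid M]
    (x : ι → M) (i : ι) (m : ℕ) : ∏ j, x j ^ Finsupp.single i m j = x i ^ m := by
  simp [Finsupp.single_apply]

lemma coercive_of_mul_norm_sq_le {n : ℕ} {g : (Fin n → ℝ) → ℝ} {C : ℝ} (hC : 0 < C)
    (h : ∀ x, 1 ≤ ‖x‖ → C * ‖x‖ ^ 2 ≤ g x) : Coercive g := by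
  have hnorm : Tendsto (fun x : Fin n → ℝ => ‖x‖) (comap (fun x => ‖x‖) atTop) atTop :=
    tendsto_comap
  refine tendsto_atTop_mono' _ ?_ (((tendsto_pow_atTop two_ne_zero).comp hnorm).const_mul_atTop hC)
  filter_upwards [hnorm.eventually_ge_atTop 1] with x hx using h x hx

/-- a polynomial with positive coefficients, even exponents and an
axis exponent `2kᵢeᵢ` for every coordinate direction is coercive. -/
theorem stmt11 {n : ℕ} (S : Finset (Fin n →₀ ℕ)) (c : (Fin n →₀ ℕ) → ℝ)
    (heven : ∀ α ∈ S, ∀ i, Even (α i))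
    (haxis : ∀ i : Fin n, ∃ k : ℕ, 0 < k ∧ Finsupp.single i (2 * k) ∈ S)
    (hc : ∀ α ∈ S, 0 < c α) :
    Coercive fun x : Fin n → ℝ => ∑ α ∈ S, c α * ∏ i, x i ^ (α i) := by
  choose k hk hkS using haxis
  obtain ⟨C, hC, hCle⟩ := Finset.exists_pos_forall_le_of_forall_pos hc
  refine coercive_of_mul_norm_sq_le hC fun x hx => ?_
  obtain ⟨i, hi⟩ := Pi.exists_norm_eq_norm_apply (norm_pos_iff.1 (one_pos.trans_le hx))
  rw [Real.norm_eq_abs] at hi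
  have hxi : ‖x‖ ^ 2 ≤ x i ^ (2 * k i) := by
    rw [hi, sq_abs]
    exact sq_le_pow_of_one_le_abs (hi ▸ hx) (hk i)
  calc C * ‖x‖ ^ 2 ≤ c (Finsupp.single i (2 * k i)) * x i ^ (2 * k i) :=
        mul_le_mul (hCle _ (hkS i)) hxi (sq_nonneg _) (hc _ (hkS i)).le
    _ = c (Finsupp.single i (2 * k i)) * ∏ j, x j ^ Finsupp.single i (2 * k i) j := by
        rw [Fintype.prod_pow_single]
    _ ≤ ∑ α ∈ S, c α * ∏ j, x j ^ α j :=
        Finset.single_le_sum (fun α hα => mul_nonneg (hc α hα).le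
          (Finset.prod_pow_nonneg_of_even _ x (heven α hα))) (hkS i)

end
end

section
/- Let f ∈ ℝ[x₁,…,xₙ] be a circuit polynomial, f(x) = Σ_{j=0}^{n-1} f_{α(j)} x^{α(j)} + f_{α*} x^{α*}, with r = n−1, satisfying conditions (C1), (C2) and (C3), and let λ_f denote the unique map of minimal barycentric coordinates of f. If either f_{α*} = −Θ(f,λ_f,α*), or α* ∉ (2ℕ₀)ⁿ and |f_{α*}| = Θ(f,λ_f,α*), then f is not coercive on ℝⁿ; indeed there exists a curve x : ℝ_{>0} → ℝⁿ with ‖x(t)‖ → +∞ as t → +∞ and f(x(t)) = 0 for all t > 0. -/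
/-!
By (C2) and (C3) each `2kᵢeᵢ` is a vertex with positive coefficient; in both boundary cases it
cannot be `α*` (there `c* < 0` or `α*` is not even), so with `r = n - 1` the circuit's vertices
are exactly the `2kᵢeᵢ` and `α*ᵢ = 2kᵢλᵢ`. Along `xᵢ(t) = εᵢ (t λᵢ / cᵢ)^{1/(2kᵢ)}` the vertex
terms sum to `t`, while `x(t)^{α*} = ε^{α*} t / Θ`: this is the equality case of the weighted
AM-GM inequality behind the circuit number. Signs `εᵢ = ±1` with `c* ε^{α*} = -Θ` exist exactly
in the two boundary cases, and then `f` vanishes on the whole unbounded curve.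
-/

open MvPolynomial Filter

noncomputable section

open scoped Classical

/-- The polynomial `Σ_{j=0}^r c_j x^{α(j)} + c* x^{α*}`. -/
noncomputable def circuitPoly {n r : ℕ} (α : Fin (r + 1) → (Fin n →₀ ℕ)) (c : Fin (r + 1) → ℝ)
    (αs : Fin n →₀ ℕ) (cs : ℝ) : MvPolynomial (Fin n) ℝ :=
  (∑ j, MvPolynomial.monomial (α j) (c j)) + MvPolynomial.monomial αs cs

/-- The data `(α, c, α*, c*, λ)` describes a circuit polynomial
`f = Σ_{j=0}^r c_j x^{α(j)} + c* x^{α*}` with `r ≤ n`. -/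
def IsCircuit {n r : ℕ} (α : Fin (r + 1) → (Fin n →₀ ℕ)) (c : Fin (r + 1) → ℝ)
    (αs : Fin n →₀ ℕ) (cs : ℝ) (lam : Fin (r + 1) → ℝ) : Prop :=
  r ≤ n ∧
  αs ∉ Set.range α ∧
  (∀ j, IsEvenExp (α j)) ∧
  (∀ j, 0 < c j) ∧
  Set.extremePoints ℝ
      (convexHull ℝ (expEmbed '' ((circuitPoly α c αs cs).support : Set (Fin n →₀ ℕ))))
    = expEmbed '' Set.range α ∧
  AffineIndependent ℝ (fun j => expEmbed (α j)) ∧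
  (∀ j, 0 < lam j) ∧ (∑ j, lam j) = 1 ∧ (∑ j, lam j • expEmbed (α j)) = expEmbed αs

/-- The circuit number `Θ = Π_{j=0}^r (c_j / λ_j)^{λ_j}` of a circuit polynomial. -/
noncomputable def circuitTheta {r : ℕ} (c : Fin (r + 1) → ℝ) (lam : Fin (r + 1) → ℝ) : ℝ :=
  ∏ j, (c j / lam j) ^ (lam j)

section DiagonalCurve

variable {ι : Type*}

theorem prod_mul_div_rpow_eq_div [Fintype ι] (c lam : ι → ℝ) (hc : ∀ i, 0 ≤ c i)
    (hlam : ∀ i, 0 ≤ lam i) (hsum : ∑ i, lam i = 1) {s : ℝ} (hs : 0 ≤ s) :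
    ∏ i, (s * (lam i / c i)) ^ lam i = s / ∏ i, (c i / lam i) ^ lam i := by
  have hterm : ∀ i, (s * (lam i / c i)) ^ lam i = s ^ lam i / (c i / lam i) ^ lam i := fun i => by
    rw [← Real.div_rpow hs (div_nonneg (hc i) (hlam i)), div_div_eq_mul_div, mul_div_assoc]
  rw [Finset.prod_congr rfl fun i _ => hterm i, Finset.prod_div_distrib,
    ← Real.rpow_sum_of_nonneg hs fun i _ => hlam i, hsum, Real.rpow_one]

def diagonalCurve (a : ι → ℝ) (m : ι → ℕ) (ε : ι → ℝ) (t : ℝ) : ι → ℝ :=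
  fun i => ε i * (t * a i) ^ ((m i : ℝ)⁻¹)

variable {a : ι → ℝ} {m : ι → ℕ} {ε : ι → ℝ} {t : ℝ}

theorem diagonalCurve_pow (i : ι) (hε : ε i ^ m i = 1) (hm : m i ≠ 0) (ht : 0 ≤ t * a i) :
    diagonalCurve a m ε t i ^ m i = t * a i := by
  rw [diagonalCurve, mul_pow, hε, one_mul, Real.rpow_inv_natCast_pow ht hm]

theorem prod_diagonalCurve_pow [Fintype ι] {lam : ι → ℝ} {β : ι → ℕ} (hm : ∀ i, m i ≠ 0)
    (hβ : ∀ i, (β i : ℝ) = m i * lam i) (ht : ∀ i, 0 ≤ t * a i) :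
    ∏ i, diagonalCurve a m ε t i ^ β i = (∏ i, ε i ^ β i) * ∏ i, (t * a i) ^ lam i := by
  rw [← Finset.prod_mul_distrib]
  refine Finset.prod_congr rfl fun i _ => ?_
  have hm' : (m i : ℝ) ≠ 0 := Nat.cast_ne_zero.mpr (hm i)
  rw [diagonalCurve, mul_pow, ← Real.rpow_natCast (_ ^ _), ← Real.rpow_mul (ht i), hβ,
    inv_mul_cancel_left₀ hm']

theorem tendsto_norm_diagonalCurve [Fintype ι] (i : ι) (ha : 0 < a i) (hε : ε i ≠ 0)
    (hm : m i ≠ 0) :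
    Tendsto (fun t => ‖diagonalCurve a m ε t‖) atTop atTop := by
  have hpow : Tendsto (fun t => (t * a i) ^ ((m i : ℝ)⁻¹)) atTop atTop :=
    (tendsto_rpow_atTop (by positivity)).comp (tendsto_id.atTop_mul_const ha)
  refine tendsto_atTop_mono' atTop ?_ (hpow.const_mul_atTop (abs_pos.mpr hε))
  filter_upwards [eventually_ge_atTop 0] with t ht
  calc |ε i| * (t * a i) ^ ((m i : ℝ)⁻¹) = ‖diagonalCurve a m ε t i‖ := by
        rw [diagonalCurve, Real.norm_eq_abs, abs_mul,
          abs_of_nonneg (Real.rpow_nonneg (by positivity) _)]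
    _ ≤ ‖diagonalCurve a m ε t‖ := norm_le_pi_norm _ i

theorem sum_mul_diagonalCurve_pow_add_eq_zero [Fintype ι] {c lam : ι → ℝ} {β : ι → ℕ} {cs : ℝ}
    (hc : ∀ i, 0 < c i) (hlam : ∀ i, 0 < lam i) (hsum : ∑ i, lam i = 1) (hm : ∀ i, m i ≠ 0)
    (hε : ∀ i, ε i ^ m i = 1) (hβ : ∀ i, (β i : ℝ) = m i * lam i)
    (hcs : cs * ∏ i, ε i ^ β i = -∏ i, (c i / lam i) ^ lam i) (ht : 0 ≤ t) :
    ∑ i, c i * diagonalCurve (fun i => lam i / c i) m ε t i ^ m i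
      + cs * ∏ i, diagonalCurve (fun i => lam i / c i) m ε t i ^ β i = 0 := by
  set Θ := ∏ i, (c i / lam i) ^ lam i
  have hΘ : 0 < Θ := Finset.prod_pos fun i _ => Real.rpow_pos_of_pos (div_pos (hc i) (hlam i)) _
  have hta : ∀ i, 0 ≤ t * (lam i / c i) := fun i => mul_nonneg ht (div_pos (hlam i) (hc i)).le
  have hsum_pow : ∑ i, c i * diagonalCurve (fun i => lam i / c i) m ε t i ^ m i = t := by
    calc _ = ∑ i, t * lam i := Finset.sum_congr rfl fun i _ => by
          rw [diagonalCurve_pow i (hε i) (hm i) (hta i)]; field_simp [(hc i).ne']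
      _ = t := by rw [← Finset.mul_sum, hsum, mul_one]
  have hprod : ∏ i, diagonalCurve (fun i => lam i / c i) m ε t i ^ β i
      = (∏ i, ε i ^ β i) * (t / Θ) := by
    rw [prod_diagonalCurve_pow hm hβ hta,
      prod_mul_div_rpow_eq_div c lam (fun i => (hc i).le) (fun i => (hlam i).le) hsum ht]
  rw [hsum_pow, hprod, ← mul_assoc, hcs, neg_mul, mul_div_cancel₀ t hΘ.ne', add_neg_cancel]

end DiagonalCurve

theorem exists_sign_mul_prod_pow_eq_neg {ι : Type*} [Fintype ι] {β : ι → ℕ} {a θ : ℝ}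
    (h : a = -θ ∨ (∃ i, Odd (β i)) ∧ |a| = θ) :
    ∃ ε : ι → ℝ, (∀ i, ε i ^ 2 = 1) ∧ a * ∏ i, ε i ^ β i = -θ := by
  by_cases ha : a = -θ
  · exact ⟨1, fun _ => one_pow 2, by simp [ha]⟩
  obtain ⟨⟨i₀, hodd⟩, habs⟩ := h.resolve_left ha
  have ha' : a = θ := ((abs_eq (habs ▸ abs_nonneg a)).mp habs).resolve_right ha
  refine ⟨Function.update 1 i₀ (-1), fun i => ?_, ?_⟩
  · rcases eq_or_ne i i₀ with rfl | hi <;> simp [*]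
  · rw [Finset.prod_eq_single i₀ (fun i _ hi => by simp [hi]) (by simp)]
    simp [hodd.neg_one_pow, ha']

theorem not_coercive_of_tendsto_norm {n : ℕ} {g : (Fin n → ℝ) → ℝ} {x : ℝ → Fin n → ℝ}
    (hx : Tendsto (fun t => ‖x t‖) atTop atTop) (hg : ∀ᶠ t in atTop, g (x t) = 0) :
    ¬ Coercive g := by
  intro hg_coercive
  have hpos := (hg_coercive.comp (tendsto_comap_iff.mpr hx)).eventually (eventually_gt_atTop 0)
  obtain ⟨t, ht_pos, ht_zero⟩ := (hpos.and hg).exists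
  exact (Function.comp_apply ▸ ht_pos).ne' ht_zero

theorem exists_equiv_apply_eq_single {ι : Type*} [Finite ι] {α : ι → ι →₀ ℕ} {m : ι → ℕ}
    (hm : ∀ i, m i ≠ 0) (h : ∀ i, Finsupp.single i (m i) ∈ Set.range α) :
    ∃ σ : ι ≃ ι, ∀ i, α (σ i) = Finsupp.single i (m i) := by
  choose σ hσ using h
  have hinj : Function.Injective σ := fun i i' hii' => by
    have hi : Finsupp.single i' (m i') i ≠ 0 := by
      rw [← hσ i', ← hii', hσ i, Finsupp.single_eq_same]; exact hm i
    exact (Finsupp.single_apply_ne_zero.mp hi).1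
  exact ⟨Equiv.ofBijective σ (Finite.injective_iff_bijective.mp hinj), hσ⟩

theorem isEvenExp_single_two_mul {n : ℕ} (i : Fin n) (k : ℕ) :
    IsEvenExp (Finsupp.single i (2 * k)) := fun j => by
  rw [Finsupp.single_apply]
  split_ifs
  exacts [even_two_mul k, Even.zero]

section CircuitPoly

variable {n r : ℕ} {α : Fin (r + 1) → (Fin n →₀ ℕ)} {c : Fin (r + 1) → ℝ} {αs : Fin n →₀ ℕ}
  {cs : ℝ}

theorem eval_circuitPoly (x : Fin n → ℝ) :
    eval x (circuitPoly α c αs cs) = ∑ j, c j * ∏ i, x i ^ α j i + cs * ∏ i, x i ^ αs i := by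
  simp [circuitPoly, eval_monomial, Finsupp.prod_pow]

theorem coeff_circuitPoly (β : Fin n →₀ ℕ) :
    (circuitPoly α c αs cs).coeff β
      = (∑ j, if α j = β then c j else 0) + if αs = β then cs else 0 := by
  simp [circuitPoly, coeff_sum, coeff_monomial]

theorem coeff_circuitPoly_self (hαs : αs ∉ Set.range α) :
    (circuitPoly α c αs cs).coeff αs = cs := by
  rw [coeff_circuitPoly, if_pos rfl, Finset.sum_eq_zero fun j _ => if_neg fun h => hαs ⟨j, h⟩,
    zero_add]

theorem mem_range_of_coeff_circuitPoly_ne_zero {β : Fin n →₀ ℕ}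
    (hβ : (circuitPoly α c αs cs).coeff β ≠ 0) (hne : β ≠ αs) : β ∈ Set.range α := by
  by_contra hrange
  refine hβ ?_
  rw [coeff_circuitPoly, if_neg hne.symm,
    Finset.sum_eq_zero fun j _ => if_neg fun h => hrange ⟨j, h⟩, add_zero]

end CircuitPoly

section DiagonalCircuit

variable {r : ℕ} {α : Fin (r + 1) → (Fin (r + 1) →₀ ℕ)} {m : Fin (r + 1) → ℕ}
  {σ : Fin (r + 1) ≃ Fin (r + 1)}

theorem eval_circuitPoly_of_equiv (hσ : ∀ i, α (σ i) = Finsupp.single i (m i))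
    (c : Fin (r + 1) → ℝ) (αs : Fin (r + 1) →₀ ℕ) (cs : ℝ) (x : Fin (r + 1) → ℝ) :
    eval x (circuitPoly α c αs cs) = ∑ i, c (σ i) * x i ^ m i + cs * ∏ i, x i ^ αs i := by
  rw [eval_circuitPoly, ← σ.sum_comp]
  congr 1
  refine Finset.sum_congr rfl fun i _ => ?_
  rw [hσ, Finset.prod_eq_single i (fun j _ hj => by rw [Finsupp.single_eq_of_ne hj, pow_zero])
    (by simp), Finsupp.single_eq_same]

theorem cast_apply_eq_of_sum_smul_expEmbed (hσ : ∀ i, α (σ i) = Finsupp.single i (m i))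
    {lam : Fin (r + 1) → ℝ} {β : Fin (r + 1) →₀ ℕ}
    (h : ∑ j, lam j • expEmbed (α j) = expEmbed β) (i : Fin (r + 1)) :
    (β i : ℝ) = m i * lam (σ i) := by
  have hi := congrFun h i
  simp only [Finset.sum_apply, Pi.smul_apply, smul_eq_mul, expEmbed] at hi
  rw [← hi, ← σ.sum_comp, Finset.sum_eq_single i (fun j _ hj => by simp [hσ, hj]) (by simp), hσ,
    Finsupp.single_eq_same, mul_comm]

end DiagonalCircuit

theorem stmt12_general {n r : ℕ} (α : Fin (r + 1) → (Fin n →₀ ℕ)) (c : Fin (r + 1) → ℝ)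
    (αs : Fin n →₀ ℕ) (cs : ℝ) (lam : Fin (r + 1) → ℝ)
    (hcirc : IsCircuit α c αs cs lam) (hr : r + 1 = n)
    (hC2 : CondC2 (circuitPoly α c αs cs))
    (hC3 : CondC3 (circuitPoly α c αs cs))
    (heq : cs = -circuitTheta c lam ∨ (¬ IsEvenExp αs ∧ |cs| = circuitTheta c lam)) :
    (¬ Coercive fun x => MvPolynomial.eval x (circuitPoly α c αs cs)) ∧
      ∃ x : ℝ → (Fin n → ℝ), Tendsto (fun t => ‖x t‖) atTop atTop ∧
        ∀ t > (0 : ℝ), MvPolynomial.eval (x t) (circuitPoly α c αs cs) = 0 := by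
  obtain ⟨-, hαs, -, hc, -, -, hlam, hlam_sum, hlam_comb⟩ := hcirc
  subst hr
  choose k hk hkV using hC3
  have hm : ∀ i, 2 * k i ≠ 0 := fun i => by have := hk i; omega
  have hsingle_ne : ∀ i, Finsupp.single i (2 * k i) ≠ αs := by
    rintro i hi
    rcases heq with hcs | ⟨hodd, -⟩
    · have hpos := hC2 _ (hkV i)
      rw [hi, coeff_circuitPoly_self hαs, hcs] at hpos
      exact (Finset.prod_pos fun j _ => Real.rpow_pos_of_pos (div_pos (hc j) (hlam j)) _).not_gt
        (neg_pos.mp hpos)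
    · exact hodd (hi ▸ isEvenExp_single_two_mul i (k i))
  obtain ⟨σ, hσ⟩ := exists_equiv_apply_eq_single hm fun i =>
    mem_range_of_coeff_circuitPoly_ne_zero (hC2 _ (hkV i)).ne' (hsingle_ne i)
  obtain ⟨ε, hε, hεcs⟩ := exists_sign_mul_prod_pow_eq_neg (β := αs) <| heq.imp_right
    fun h => ⟨by simpa [IsEvenExp, Nat.not_even_iff_odd] using h.1, h.2⟩
  set x := diagonalCurve (fun i => lam (σ i) / c (σ i)) (fun i => 2 * k i) ε
  have hzero : ∀ t > (0 : ℝ), eval (x t) (circuitPoly α c αs cs) = 0 := fun t ht => by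
    rw [eval_circuitPoly_of_equiv hσ]
    refine sum_mul_diagonalCurve_pow_add_eq_zero (fun i => hc _) (fun i => hlam _)
      (by rwa [σ.sum_comp]) hm (fun i => by rw [pow_mul, hε, one_pow])
      (cast_apply_eq_of_sum_smul_expEmbed hσ hlam_comb) ?_ ht.le
    rw [hεcs, circuitTheta, σ.prod_comp (fun j => (c j / lam j) ^ lam j)]
  have hx : Tendsto (fun t => ‖x t‖) atTop atTop :=
    tendsto_norm_diagonalCurve 0 (div_pos (hlam _) (hc _)) (fun h => by simpa [h] using hε 0)
      (hm 0)
  exact ⟨not_coercive_of_tendsto_norm hx ((eventually_gt_atTop 0).mono hzero), x, hx, hzero⟩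

/-- in the boundary cases `c* = −Θ`, or `α*` odd and `|c*| = Θ`, a
circuit polynomial with `r = n − 1` satisfying (C1)-(C3) is not coercive; there even
exists an unbounded curve along which the polynomial vanishes. -/
theorem stmt12 {n r : ℕ} (α : Fin (r + 1) → (Fin n →₀ ℕ)) (c : Fin (r + 1) → ℝ)
    (αs : Fin n →₀ ℕ) (cs : ℝ) (lam : Fin (r + 1) → ℝ)
    (hcirc : IsCircuit α c αs cs lam) (hr : r + 1 = n)
    (hC1 : CondC1 (circuitPoly α c αs cs)) (hC2 : CondC2 (circuitPoly α c αs cs))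
    (hC3 : CondC3 (circuitPoly α c αs cs))
    (heq : cs = -circuitTheta c lam ∨ (¬ IsEvenExp αs ∧ |cs| = circuitTheta c lam)) :
    (¬ Coercive fun x => MvPolynomial.eval x (circuitPoly α c αs cs)) ∧
      ∃ x : ℝ → (Fin n → ℝ), Tendsto (fun t => ‖x t‖) atTop atTop ∧
        ∀ t > (0 : ℝ), MvPolynomial.eval (x t) (circuitPoly α c αs cs) = 0 :=
  stmt12_general α c αs cs lam hcirc hr hC2 hC3 heq

end
end

section
/- Let f ∈ ℝ[x₁,…,xₙ] be a circuit polynomial with r = n satisfying condition (C3). Then f is gem regular, i.e., no exponent vector of f lies in Vᶜ(f) ∩ G for a nonempty face G of New∞(f) with 0 ∉ G. -/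
/-!
`New∞(f)` is the convex hull of `0` and the affinely independent exponents `α(0), …, α(r)`,
since `α*` lies in the simplex `Δ = conv{α(j)}`. A face `G` of `New∞(f)` avoiding `0` lies in
`Δ`, so an `α(j) ∈ G` is an extreme point of `Δ`, hence of `G`, hence of `New∞(f)`: it is a
vertex. For `r = n` the simplex `Δ` is full-dimensional and `α*`, having positive barycentric
coordinates, is an interior point of `New∞(f)`; a face through an interior point is the whole
polytope, so it would contain `0`.
-/

open MvPolynomial Filter

noncomputable section

open scoped Classical

section Faces

open Set

variable {𝕜 E : Type*} [Field 𝕜] [LinearOrder 𝕜] [IsStrictOrderedRing 𝕜] [AddCommGroup E]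
  [Module 𝕜 E] {s G : Set E} {x : E}

theorem mem_convexHull_insert_iff (hs : s.Nonempty) {y : E} :
    y ∈ convexHull 𝕜 (insert x s) ↔ ∃ u ∈ convexHull 𝕜 s, y ∈ segment 𝕜 x u := by
  rw [convexHull_insert hs, convexJoin_singleton_left, mem_iUnion₂]
  simp only [exists_prop]

theorem mem_extremePoints_convexHull_insert (hx : x ∉ convexHull 𝕜 s) :
    x ∈ (convexHull 𝕜 (insert x s)).extremePoints 𝕜 := by
  rcases s.eq_empty_or_nonempty with rfl | hs
  · simp
  refine ⟨subset_convexHull 𝕜 _ (mem_insert x s), fun y hy z hz hxyz => ?_⟩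
  obtain ⟨u, hu, p, q, hp, hq, hpq, rfl⟩ := (mem_convexHull_insert_iff hs).1 hy
  obtain ⟨v, hv, p', q', hp', hq', hpq', rfl⟩ := (mem_convexHull_insert_iff hs).1 hz
  obtain ⟨a, b, ha, hb, hab, hxab⟩ := hxyz
  rcases hq.eq_or_lt with rfl | hq
  · rw [add_zero] at hpq
    simp [hpq]
  -- for `q > 0`, `x` is a proper convex combination of `u, v ∈ convexHull 𝕜 s`
  have hk : 0 < a * q + b * q' := by positivity
  have hcomb : (a * q + b * q') • x = (a * q) • u + (b * q') • v := by
    rw [← sub_eq_zero]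
    linear_combination (norm := module) -hxab + (a * hpq + b * hpq' + hab) • x
  have hx' : x = (a * q + b * q')⁻¹ • ((a * q) • u + (b * q') • v) := by
    rw [← hcomb, smul_smul, inv_mul_cancel₀ hk.ne', one_smul]
  refine absurd ?_ hx
  rw [hx', smul_add, smul_smul, smul_smul]
  exact convex_convexHull 𝕜 s hu hv (by positivity) (by positivity) (by field_simp)

theorem AffineIndependent.mem_extremePoints_convexHull {ι : Type*} {p : ι → E}
    (hp : AffineIndependent 𝕜 p) (i : ι) : p i ∈ (convexHull 𝕜 (range p)).extremePoints 𝕜 := by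
  have hrange : range p = insert (p i) (p '' (univ \ {i})) := by
    rw [← image_insert_eq, insert_sdiff_singleton, insert_eq_of_mem (mem_univ i), image_univ]
  rw [hrange]
  exact mem_extremePoints_convexHull_insert fun h =>
    hp.notMem_affineSpan_sdiff i univ (convexHull_subset_affineSpan _ h)

theorem IsExtreme.subset_convexHull_of_notMem
    (hG : IsExtreme 𝕜 (convexHull 𝕜 (insert x s)) G) (hx : x ∉ G) : G ⊆ convexHull 𝕜 s := by
  rcases s.eq_empty_or_nonempty with rfl | hs
  · intro y hy
    have hyx : y = x := by simpa using hG.1 hy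
    exact absurd (hyx ▸ hy) hx
  intro y hy
  obtain ⟨u, hu, hyu⟩ := (mem_convexHull_insert_iff hs).1 (hG.1 hy)
  rw [← insert_endpoints_openSegment] at hyu
  rcases hyu with rfl | rfl | hyu
  · exact absurd hy hx
  · exact hu
  · exact absurd (hG.2 (subset_convexHull 𝕜 _ (mem_insert _ _))
      (convexHull_mono (subset_insert _ _) hu) hy hyu) hx

theorem IsExtreme.mem_extremePoints_of_affineIndependent {ι : Type*} {p : ι → E}
    (hp : AffineIndependent 𝕜 p) (hG : IsExtreme 𝕜 (convexHull 𝕜 (insert x (range p))) G)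
    (hx : x ∉ G) {i : ι} (hi : p i ∈ G) :
    p i ∈ (convexHull 𝕜 (insert x (range p))).extremePoints 𝕜 :=
  hG.extremePoints_subset_extremePoints <| inter_extremePoints_subset_extremePoints_of_subset
    (hG.subset_convexHull_of_notMem hx) ⟨hi, hp.mem_extremePoints_convexHull i⟩

end Faces

section Interior

open Set Filter Topology

theorem IsExtreme.eq_of_mem_interior {E : Type*} [AddCommGroup E] [Module ℝ E]
    [TopologicalSpace E] [ContinuousAdd E] [ContinuousSMul ℝ E] {A G : Set E} {x : E}
    (hG : IsExtreme ℝ A G) (hxG : x ∈ G) (hxA : x ∈ interior A) : G = A := by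
  refine hG.1.antisymm fun a ha => ?_
  -- `x` lies in the open segment from `a` to `x + t • (x - a)`, a point of `A` for small `t > 0`
  have hcont : Tendsto (fun t : ℝ => x + t • (x - a)) (𝓝 0) (𝓝 x) :=
    Continuous.tendsto' (by fun_prop) 0 x (by simp)
  obtain ⟨t, hyA, ht⟩ := ((hcont.eventually (mem_interior_iff_mem_nhds.1 hxA)).filter_mono
    nhdsWithin_le_nhds |>.and self_mem_nhdsWithin).exists (f := 𝓝[>] (0 : ℝ))
  refine hG.2 ha hyA hxG ⟨t / (1 + t), 1 / (1 + t), by positivity, by positivity, ?_, ?_⟩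
  · field_simp
    ring
  · linear_combination (norm := module) (inv_mul_cancel₀ (by positivity : 1 + t ≠ 0)) • x

theorem AffineIndependent.sum_smul_mem_interior_convexHull {ι E : Type*} [Fintype ι]
    [NormedAddCommGroup E] [NormedSpace ℝ E] [FiniteDimensional ℝ E] {p : ι → E}
    (hp : AffineIndependent ℝ p) (hcard : Fintype.card ι = Module.finrank ℝ E + 1) {w : ι → ℝ}
    (hw : ∀ i, 0 < w i) (hw1 : ∑ i, w i = 1) :
    ∑ i, w i • p i ∈ interior (convexHull ℝ (range p)) := by
  let b : AffineBasis ι ℝ E := ⟨p, hp, hp.affineSpan_eq_top_iff_card_eq_finrank_add_one.2 hcard⟩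
  change ∑ i, w i • b i ∈ interior (convexHull ℝ (range b))
  rw [b.interior_convexHull, ← Finset.univ.affineCombination_eq_linear_combination _ _ hw1]
  intro i
  rw [b.coord_apply_combination_of_mem (Finset.mem_univ i) hw1]
  exact hw i

theorem IsExtreme.sum_smul_notMem_of_affineIndependent {ι E : Type*} [Fintype ι]
    [NormedAddCommGroup E] [NormedSpace ℝ E] [FiniteDimensional ℝ E] {p : ι → E} {G : Set E}
    {x : E} (hp : AffineIndependent ℝ p) (hcard : Fintype.card ι = Module.finrank ℝ E + 1)
    (hG : IsExtreme ℝ (convexHull ℝ (insert x (range p))) G) (hx : x ∉ G) {w : ι → ℝ}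
    (hw : ∀ i, 0 < w i) (hw1 : ∑ i, w i = 1) : ∑ i, w i • p i ∉ G := fun hwG =>
  hx <| (hG.eq_of_mem_interior hwG <| interior_mono (convexHull_mono (subset_insert _ _))
    (hp.sum_smul_mem_interior_convexHull hcard hw hw1)).symm ▸
      subset_convexHull ℝ _ (mem_insert _ _)

end Interior

section CircuitPolynomial

open Set

variable {n r : ℕ} {α : Fin (r + 1) → (Fin n →₀ ℕ)} {c : Fin (r + 1) → ℝ} {αs : Fin n →₀ ℕ}
  {cs : ℝ}

theorem expEmbed_zero : expEmbed (0 : Fin n →₀ ℕ) = 0 := by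
  funext i
  simp [expEmbed]

theorem expEmbed_injective : Function.Injective (expEmbed (n := n)) :=
  fun _ _ h => Finsupp.ext fun i => Nat.cast_injective (congrFun h i)

theorem support_circuitPoly_subset :
    ((circuitPoly α c αs cs).support : Set (Fin n →₀ ℕ)) ⊆ insert αs (range α) := by
  intro β hβ
  rcases Finset.mem_union.1 (support_add hβ) with hβ | hβ
  · obtain ⟨j, -, hj⟩ := Finset.mem_biUnion.1 (support_sum hβ)
    exact mem_insert_of_mem _ ⟨j, (Finset.mem_singleton.1 (support_monomial_subset hj)).symm⟩
  · exact Or.inl (Finset.mem_singleton.1 (support_monomial_subset hβ))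

theorem newtonInfty_circuitPoly {lam : Fin (r + 1) → ℝ} (hcirc : IsCircuit α c αs cs lam) :
    newtonInfty (circuitPoly α c αs cs) =
      convexHull ℝ (insert 0 (range fun j => expEmbed (α j))) := by
  obtain ⟨-, -, -, -, hext, -, hlam, hlam1, hlamsum⟩ := hcirc
  have hrange : range α ⊆ (circuitPoly α c αs cs).support := by
    rw [← image_subset_image_iff expEmbed_injective, ← hext]
    exact extremePoints_convexHull_subset
  have hαs : expEmbed αs ∈ convexHull ℝ (range fun j => expEmbed (α j)) :=
    hlamsum ▸ (convex_convexHull ℝ _).sum_mem (fun j _ => (hlam j).le) hlam1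
      fun j _ => subset_convexHull ℝ _ (mem_range_self j)
  rw [newtonInfty, Finset.coe_insert, image_insert_eq, expEmbed_zero]
  refine (convexHull_min ?_ (convex_convexHull ℝ _)).antisymm
    (convexHull_mono (insert_subset_insert ?_))
  · rintro _ (rfl | ⟨β, hβ, rfl⟩)
    · exact subset_convexHull ℝ _ (mem_insert _ _)
    rcases support_circuitPoly_subset hβ with rfl | ⟨j, rfl⟩
    · exact convexHull_mono (subset_insert _ _) hαs
    · exact subset_convexHull ℝ _ (mem_insert_of_mem _ ⟨j, rfl⟩)
  · rintro _ ⟨j, rfl⟩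
    exact mem_image_of_mem _ (hrange ⟨j, rfl⟩)

end CircuitPolynomial

theorem stmt13_general {n r : ℕ} (α : Fin (r + 1) → (Fin n →₀ ℕ)) (c : Fin (r + 1) → ℝ)
    (αs : Fin n →₀ ℕ) (cs : ℝ) (lam : Fin (r + 1) → ℝ)
    (hcirc : IsCircuit α c αs cs lam) (hr : r = n) :
    GemRegular (circuitPoly α c αs cs) := by
  have hnewton := newtonInfty_circuitPoly hcirc
  obtain ⟨-, -, -, -, -, haff, hlam, hlam1, hlamsum⟩ := hcirc
  rintro β ⟨hβ, hβV, G, -, hG, h0G, hβG⟩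
  rw [hnewton] at hG
  rcases support_circuitPoly_subset hβ with rfl | ⟨j, rfl⟩
  · subst hr
    exact hG.sum_smul_notMem_of_affineIndependent haff (by simp) h0G hlam hlam1
      (hlamsum ▸ hβG)
  · refine hβV (Finset.mem_erase.2 ⟨fun h0 => h0G ?_, Finset.mem_filter.2
      ⟨Finset.mem_insert_of_mem hβ, hnewton ▸ ?_⟩⟩)
    · rwa [h0, expEmbed_zero] at hβG
    · exact hG.mem_extremePoints_of_affineIndependent haff h0G hβG

/-- a circuit polynomial with `r = n` satisfying (C3) is gem regular. -/
theorem stmt13 {n r : ℕ} (α : Fin (r + 1) → (Fin n →₀ ℕ)) (c : Fin (r + 1) → ℝ)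
    (αs : Fin n →₀ ℕ) (cs : ℝ) (lam : Fin (r + 1) → ℝ)
    (hcirc : IsCircuit α c αs cs lam) (hr : r = n)
    (hC3 : CondC3 (circuitPoly α c αs cs)) :
    GemRegular (circuitPoly α c αs cs) :=
  stmt13_general α c αs cs lam hcirc hr

end
end

section
/- Let a, b, c ∈ ℝ and consider the bivariate polynomial f(x,y) = a·x⁴ + b·x³y + c·y⁴. Then f is coercive on ℝ², i.e. f(x,y) → +∞ as ‖(x,y)‖ → +∞, if and only if a > 0, c > 0 and |b| < 4·3^{−3/4}·a^{3/4}·c^{1/4}. -/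
/-!
Both directions rest on the homogeneity `f(t • p) = t⁴ f(p)`. A coercive form must be positive
at every `p ≠ 0` (follow the ray through `p`); evaluating at `(1,0)`, `(0,1)` and at the
critical direction `(-3b, 4a)`, where `f = a (256 a³ c - 27 b⁴)`, gives `a > 0`, `c > 0` and
`27 b⁴ < 256 a³ c`, which is the stated bound raised to the fourth power. Conversely,
`256 a³ f = (4ax + 3by)² ((4ax - by)² + 2b²y²) + (256 a³ c - 27 b⁴) y⁴`, so the strict
inequality survives replacing `a, c` by `a - ε, c - ε`, giving `f ≥ ε (x⁴ + y⁴) ≥ ε ‖(x,y)‖⁴`.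
-/

open Filter Topology

/-- `g` is coercive on `ℝ²`: `g(x,y) → +∞` whenever `‖(x,y)‖ → +∞`. -/
def Coercive2 (g : ℝ × ℝ → ℝ) : Prop :=
  Tendsto g (comap (fun p : ℝ × ℝ => ‖p‖) atTop) atTop

section Coercivity

variable {E : Type*} [NormedAddCommGroup E]

lemma tendsto_comap_norm_of_le {g : E → ℝ} {ε : ℝ} {n : ℕ} (hε : 0 < ε) (hn : n ≠ 0)
    (hle : ∀ x, ε * ‖x‖ ^ n ≤ g x) : Tendsto g (comap (‖·‖) atTop) atTop :=
  tendsto_atTop_mono hle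
    (((tendsto_pow_atTop hn).const_mul_atTop hε).comp tendsto_comap)

variable [NormedSpace ℝ E]

lemma tendsto_smul_comap_norm_atTop {x : E} (hx : x ≠ 0) :
    Tendsto (fun t : ℝ => t • x) atTop (comap (‖·‖) atTop) := by
  rw [tendsto_comap_iff]
  simpa [Function.comp_def, norm_smul] using
    tendsto_abs_atTop_atTop.atTop_mul_const (norm_pos_iff.mpr hx)

lemma pos_of_tendsto_comap_norm_of_homogeneous {g : E → ℝ} {n : ℕ}
    (hg : Tendsto g (comap (‖·‖) atTop) atTop) (hhom : ∀ (t : ℝ) x, g (t • x) = t ^ n * g x)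
    {x : E} (hx : x ≠ 0) : 0 < g x := by
  obtain ⟨t, hgt, ht⟩ := (((hg.comp (tendsto_smul_comap_norm_atTop hx)).eventually_gt_atTop 0).and
    (eventually_ge_atTop 0)).exists
  rw [Function.comp_apply, hhom] at hgt
  exact pos_of_mul_pos_right hgt (pow_nonneg ht n)

end Coercivity

section Quartic

variable (a b c : ℝ)

def binaryQuartic (p : ℝ × ℝ) : ℝ := a * p.1 ^ 4 + b * p.1 ^ 3 * p.2 + c * p.2 ^ 4

lemma binaryQuartic_smul (t : ℝ) (p : ℝ × ℝ) :
    binaryQuartic a b c (t • p) = t ^ 4 * binaryQuartic a b c p := by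
  simp only [binaryQuartic, Prod.smul_fst, Prod.smul_snd, smul_eq_mul]
  ring

lemma binaryQuartic_critical :
    binaryQuartic a b c (-3 * b, 4 * a) = a * (256 * a ^ 3 * c - 27 * b ^ 4) := by
  simp only [binaryQuartic]
  ring

lemma binaryQuartic_nonneg {a : ℝ} (ha : 0 < a) (h : 27 * b ^ 4 ≤ 256 * a ^ 3 * c)
    (p : ℝ × ℝ) : 0 ≤ binaryQuartic a b c p := by
  obtain ⟨x, y⟩ := p
  have hsos : 256 * a ^ 3 * binaryQuartic a b c (x, y) =
      (4 * a * x + 3 * b * y) ^ 2 * ((4 * a * x - b * y) ^ 2 + 2 * (b * y) ^ 2)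
        + (256 * a ^ 3 * c - 27 * b ^ 4) * y ^ 4 := by
    simp only [binaryQuartic]
    ring
  have hrhs : 0 ≤ 256 * a ^ 3 * binaryQuartic a b c (x, y) := by
    rw [hsos]
    have := sub_nonneg.mpr h
    positivity
  exact nonneg_of_mul_nonneg_right hrhs (by positivity)

lemma exists_mul_norm_pow_le_binaryQuartic {a c : ℝ} (ha : 0 < a)
    (h : 27 * b ^ 4 < 256 * a ^ 3 * c) :
    ∃ ε > 0, ∀ p : ℝ × ℝ, ε * ‖p‖ ^ 4 ≤ binaryQuartic a b c p := by
  have hcont : ∀ᶠ ε in 𝓝 (0 : ℝ), 27 * b ^ 4 < 256 * (a - ε) ^ 3 * (c - ε) ∧ ε < a := by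
    refine ContinuousAt.eventually_lt (by fun_prop) (by fun_prop) (by simpa using h) |>.and ?_
    exact eventually_lt_nhds ha
  obtain ⟨ε, ⟨hdisc, hεa⟩, hε⟩ :=
    ((hcont.filter_mono nhdsWithin_le_nhds).and (self_mem_nhdsWithin (s := Set.Ioi 0))).exists
  refine ⟨ε, hε, fun p => ?_⟩
  have hrest := binaryQuartic_nonneg b (c - ε) (sub_pos.mpr hεa) hdisc.le p
  have hnorm : ‖p‖ ^ 4 ≤ p.1 ^ 4 + p.2 ^ 4 := by
    have hx : 0 ≤ p.1 ^ 4 := by positivity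
    have hy : 0 ≤ p.2 ^ 4 := by positivity
    rw [Prod.norm_def, Real.norm_eq_abs, Real.norm_eq_abs]
    rcases max_cases |p.1| |p.2| with ⟨hm, -⟩ | ⟨hm, -⟩ <;>
      rw [hm, Even.pow_abs (by decide)] <;> linarith
  have hε' : ε * ‖p‖ ^ 4 ≤ ε * (p.1 ^ 4 + p.2 ^ 4) := mul_le_mul_of_nonneg_left hnorm hε.le
  simp only [binaryQuartic] at hrest ⊢
  linarith

end Quartic

lemma abs_lt_rpow_iff {a b c : ℝ} (ha : 0 < a) (hc : 0 < c) :
    |b| < 4 * (3 : ℝ) ^ (-(3 : ℝ) / 4) * a ^ ((3 : ℝ) / 4) * c ^ ((1 : ℝ) / 4) ↔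
      27 * b ^ 4 < 256 * a ^ 3 * c := by
  set K := 4 * (3 : ℝ) ^ (-(3 : ℝ) / 4) * a ^ ((3 : ℝ) / 4) * c ^ ((1 : ℝ) / 4)
  have hK4 : K ^ 4 = 256 / 27 * (a ^ 3 * c) := by
    simp only [K, mul_pow]
    rw [← Real.rpow_natCast ((3 : ℝ) ^ (-(3 : ℝ) / 4)) 4, ← Real.rpow_natCast (a ^ ((3 : ℝ) / 4)) 4,
      ← Real.rpow_natCast (c ^ ((1 : ℝ) / 4)) 4, ← Real.rpow_mul (by norm_num),
      ← Real.rpow_mul ha.le, ← Real.rpow_mul hc.le]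
    norm_num
    ring
  rw [← pow_lt_pow_iff_left₀ (abs_nonneg b) (by positivity) four_ne_zero,
    Even.pow_abs (by decide), hK4]
  constructor <;> intro h <;> linarith

/-- characterization of coercivity of `f(x,y) = a x⁴ + b x³ y + c y⁴`. -/
theorem stmt15 (a b c : ℝ) :
    Coercive2 (fun p : ℝ × ℝ => a * p.1 ^ 4 + b * p.1 ^ 3 * p.2 + c * p.2 ^ 4) ↔
      (0 < a ∧ 0 < c ∧
        |b| < 4 * (3 : ℝ) ^ (-(3 : ℝ) / 4) * a ^ ((3 : ℝ) / 4) * c ^ ((1 : ℝ) / 4)) := by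
  change Tendsto (binaryQuartic a b c) _ _ ↔ _
  constructor
  · intro hco
    have hpos (p : ℝ × ℝ) (hp : p ≠ 0) : 0 < binaryQuartic a b c p :=
      pos_of_tendsto_comap_norm_of_homogeneous hco (binaryQuartic_smul a b c) hp
    have ha : 0 < a := by simpa [binaryQuartic] using hpos (1, 0) (by simp)
    have hc : 0 < c := by simpa [binaryQuartic] using hpos (0, 1) (by simp)
    have hdisc : 0 < a * (256 * a ^ 3 * c - 27 * b ^ 4) := by
      rw [← binaryQuartic_critical]
      exact hpos _ (by simp [ha.ne'])
    refine ⟨ha, hc, (abs_lt_rpow_iff ha hc).mpr ?_⟩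
    linarith [pos_of_mul_pos_right hdisc ha.le]
  · rintro ⟨ha, hc, hb⟩
    obtain ⟨ε, hε, hle⟩ :=
      exists_mul_norm_pow_le_binaryQuartic b ha ((abs_lt_rpow_iff ha hc).mp hb)
    exact tendsto_comap_norm_of_le hε four_ne_zero hle
end

section
/- Let a, b, c ∈ ℝ with a > 0, c > 0 and |b| < min{(4/3)·a, 4·c}. Then the bivariate polynomial f(x,y) = a·x⁴ + b·x³y + c·y⁴ is coercive on ℝ². -/
/-!
With `ε = min (a - 3|b|/4) (c - |b|/4) > 0`, the weighted AM–GM inequality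
`4 |x³y| ≤ 3x⁴ + y⁴` absorbs the cross term, giving `f(x,y) ≥ ε (x⁴ + y⁴) ≥ ε ‖(x,y)‖⁴`
for the sup norm on `ℝ × ℝ`.
-/

open Filter

theorem coercive2_of_const_mul_norm_pow_le {g : ℝ × ℝ → ℝ} {ε : ℝ} {n : ℕ} (hε : 0 < ε)
    (hn : n ≠ 0) (h : ∀ p, ε * ‖p‖ ^ n ≤ g p) : Coercive2 g :=
  tendsto_atTop_mono h <| ((tendsto_pow_atTop hn).const_mul_atTop hε).comp tendsto_comap

theorem four_mul_abs_pow_three_mul_le (x y : ℝ) : 4 * |x ^ 3 * y| ≤ 3 * x ^ 4 + y ^ 4 := by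
  have hx := abs_nonneg x
  have hy := abs_nonneg y
  rw [abs_mul, abs_pow, ← (show Even 4 by decide).pow_abs x, ← (show Even 4 by decide).pow_abs y]
  nlinarith [sq_nonneg (|x| - |y|), mul_nonneg hx hy, mul_nonneg (mul_nonneg hx hx) hy,
    mul_nonneg (mul_nonneg (mul_nonneg hx hx) hx) hy]

theorem Prod.norm_pow_four_le (p : ℝ × ℝ) : ‖p‖ ^ 4 ≤ p.1 ^ 4 + p.2 ^ 4 := by
  rw [Prod.norm_def, Real.norm_eq_abs, Real.norm_eq_abs, ← (show Even 4 by decide).pow_abs p.1,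
    ← (show Even 4 by decide).pow_abs p.2]
  have h1 := pow_nonneg (abs_nonneg p.1) 4
  have h2 := pow_nonneg (abs_nonneg p.2) 4
  rcases max_cases |p.1| |p.2| with ⟨h, _⟩ | ⟨h, _⟩ <;> rw [h] <;> linarith

theorem Prod.mul_norm_pow_four_le {ε α β : ℝ} (hε : 0 ≤ ε) (hα : ε ≤ α) (hβ : ε ≤ β)
    (p : ℝ × ℝ) : ε * ‖p‖ ^ 4 ≤ α * p.1 ^ 4 + β * p.2 ^ 4 := by
  have h1 := mul_le_mul_of_nonneg_right hα ((show Even 4 by decide).pow_nonneg p.1)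
  have h2 := mul_le_mul_of_nonneg_right hβ ((show Even 4 by decide).pow_nonneg p.2)
  nlinarith [mul_le_mul_of_nonneg_left p.norm_pow_four_le hε]

theorem weighted_pow_four_le_quartic (a b c x y : ℝ) :
    (a - 3 / 4 * |b|) * x ^ 4 + (c - 1 / 4 * |b|) * y ^ 4 ≤
      a * x ^ 4 + b * x ^ 3 * y + c * y ^ 4 := by
  have hcross := neg_abs_le (b * x ^ 3 * y)
  rw [mul_assoc, abs_mul] at hcross
  nlinarith [mul_le_mul_of_nonneg_left (four_mul_abs_pow_three_mul_le x y) (abs_nonneg b)]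

theorem stmt16_general (a b c : ℝ)
    (hb : |b| < min ((4 / 3) * a) (4 * c)) :
    Coercive2 (fun p : ℝ × ℝ => a * p.1 ^ 4 + b * p.1 ^ 3 * p.2 + c * p.2 ^ 4) := by
  set ε := min (a - 3 / 4 * |b|) (c - 1 / 4 * |b|)
  have hε : 0 < ε := by
    rw [lt_min_iff] at hb ⊢
    constructor <;> linarith
  refine coercive2_of_const_mul_norm_pow_le hε four_ne_zero fun p => ?_
  calc ε * ‖p‖ ^ 4
      ≤ (a - 3 / 4 * |b|) * p.1 ^ 4 + (c - 1 / 4 * |b|) * p.2 ^ 4 :=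
        Prod.mul_norm_pow_four_le hε.le (min_le_left _ _) (min_le_right _ _) p
    _ ≤ _ := weighted_pow_four_le_quartic a b c p.1 p.2

/-- `f(x,y) = a x⁴ + b x³ y + c y⁴` is coercive on `ℝ²` whenever
`a > 0`, `c > 0` and `|b| < min {(4/3) a, 4 c}`. -/
theorem stmt16 (a b c : ℝ) (ha : 0 < a) (hc : 0 < c)
    (hb : |b| < min ((4 / 3) * a) (4 * c)) :
    Coercive2 (fun p : ℝ × ℝ => a * p.1 ^ 4 + b * p.1 ^ 3 * p.2 + c * p.2 ^ 4) :=
  stmt16_general a b c hb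
end
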